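/- For v ∈ (0, 1/2), there exists t* ∈ (0,∞) such that the function h_v(t) = (cosh(vt) + v·sinh(vt)·sinh t) / ((cosh t + 1)·cosh(vt)) is strictly decreasing on (0,t*) and strictly increasing on (t*,∞); consequently h_v(t*) ≤ h_v(t) < 1/2 for all t > 0. -/

import Mathlib

/-!
Write `c = cosh (v t)`, `s = sinh (v t)`, `C = cosh t`, `S = sinh t`. A direct computation gives
`h_v' t = S / (C + 1)² · ψ t` with `ψ t = v tanh (v t) / tanh (t / 2) + v² (C + 1) / c² - 1`.
For `0 < v < 1/2` both ratios in `ψ` are strictly increasing on `(0, ∞)`: the first because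
`sinh` is strictly convex on `[0, ∞)`, so `sinh (2 v t) < 2 v sinh t`; the second because
`2 v tanh (v t) < tanh (t / 2)`. Since `ψ t < 2 v² (C + 1) - 1 → 4 v² - 1 < 0` as `t → 0⁺`
and `ψ → ∞`, `ψ` has exactly one zero `t*`, the unique critical point of `h_v`, where `h_v`
attains its minimum. The bound `h_v < 1/2` is again `2 v tanh (v t) < tanh (t / 2)`.
-/

open Real Filter Set Topology

theorem Real.strictConvexOn_sinh : StrictConvexOn ℝ (Ici 0) sinh := by
  refine strictConvexOn_of_deriv2_pos (convex_Ici 0) continuous_sinh.continuousOn fun x hx => ?_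
  rw [interior_Ici] at hx
  simpa [Real.deriv_sinh, Real.deriv_cosh] using hx

theorem Real.sinh_mul_lt_mul_sinh {a x : ℝ} (ha0 : 0 < a) (ha1 : a < 1) (hx : 0 < x) :
    sinh (a * x) < a * sinh x := by
  have := Real.strictConvexOn_sinh.2 (mem_Ici.2 hx.le) (mem_Ici.2 le_rfl) hx.ne' ha0
    (sub_pos.2 ha1) (by ring)
  simpa using this

noncomputable def hFun (v t : ℝ) : ℝ :=
  (cosh (v * t) + v * sinh (v * t) * sinh t) / ((cosh t + 1) * cosh (v * t))

/-- `tanh (v t) / tanh (t / 2)`, written without `tanh`. -/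
noncomputable def tanhRatio (v t : ℝ) : ℝ :=
  sinh (v * t) * (cosh t + 1) / (cosh (v * t) * sinh t)

noncomputable def coshRatio (v t : ℝ) : ℝ := (cosh t + 1) / cosh (v * t) ^ 2

noncomputable def psi (v t : ℝ) : ℝ := v * tanhRatio v t + v ^ 2 * coshRatio v t - 1

theorem hasDerivAt_sinh_mul (v t : ℝ) :
    HasDerivAt (fun t => sinh (v * t)) (v * cosh (v * t)) t := by
  simpa [mul_comm] using ((hasDerivAt_id t).const_mul v).sinh

theorem hasDerivAt_cosh_mul (v t : ℝ) :
    HasDerivAt (fun t => cosh (v * t)) (v * sinh (v * t)) t := by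
  simpa [mul_comm] using ((hasDerivAt_id t).const_mul v).cosh

theorem hasDerivAt_tanhRatio (v : ℝ) {t : ℝ} (ht : t ≠ 0) :
    HasDerivAt (tanhRatio v)
      ((cosh t + 1) * (v * sinh t - sinh (v * t) * cosh (v * t)) / (cosh (v * t) * sinh t) ^ 2)
      t := by
  have hD : cosh (v * t) * sinh t ≠ 0 := mul_ne_zero (cosh_pos _).ne' (sinh_ne_zero.2 ht)
  refine (((hasDerivAt_sinh_mul v t).fun_mul ((Real.hasDerivAt_cosh t).add_const 1)).fun_div
    ((hasDerivAt_cosh_mul v t).fun_mul (Real.hasDerivAt_sinh t)) hD).congr_deriv ?_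
  field_simp
  linear_combination v * sinh t * (cosh t + 1) * Real.cosh_sq_sub_sinh_sq (v * t)
    - sinh (v * t) * cosh (v * t) * Real.cosh_sq_sub_sinh_sq t

theorem hasDerivAt_coshRatio (v t : ℝ) :
    HasDerivAt (coshRatio v)
      ((sinh t * cosh (v * t) - 2 * v * sinh (v * t) * (cosh t + 1)) / cosh (v * t) ^ 3) t := by
  have hc := (cosh_pos (v * t)).ne'
  refine (((Real.hasDerivAt_cosh t).add_const 1).fun_div ((hasDerivAt_cosh_mul v t).fun_pow 2)
    (pow_ne_zero 2 hc)).congr_deriv ?_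
  field_simp
  ring

theorem hasDerivAt_hFun (v : ℝ) {t : ℝ} (ht : t ≠ 0) :
    HasDerivAt (hFun v) (sinh t / (cosh t + 1) ^ 2 * psi v t) t := by
  have hc := (cosh_pos (v * t)).ne'
  have hC : cosh t + 1 ≠ 0 := by positivity
  have hS := sinh_ne_zero.2 ht
  refine (((hasDerivAt_cosh_mul v t).fun_add (((hasDerivAt_sinh_mul v t).const_mul v).fun_mul
    (Real.hasDerivAt_sinh t))).fun_div (((Real.hasDerivAt_cosh t).add_const 1).fun_mul
    (hasDerivAt_cosh_mul v t)) (mul_ne_zero hC hc)).congr_deriv ?_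
  simp only [psi, tanhRatio, coshRatio]
  field_simp
  linear_combination v * cosh (v * t) * sinh (v * t) * Real.cosh_sq_sub_sinh_sq t
    + v ^ 2 * sinh t * (cosh t + 1) * Real.cosh_sq_sub_sinh_sq (v * t)

/-- In half-angle form: `2 v tanh (v t) < tanh (t / 2)`. -/
theorem two_mul_sinh_mul_mul_cosh_add_one_lt {v t : ℝ} (hv0 : 0 < v) (hv : v < 1 / 2)
    (ht : 0 < t) : 2 * v * sinh (v * t) * (cosh t + 1) < sinh t * cosh (v * t) := by
  have hS : sinh t = 2 * sinh (t / 2) * cosh (t / 2) := by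
    rw [← sinh_two_mul, mul_div_cancel₀ t two_ne_zero]
  have hC : cosh t + 1 = 2 * cosh (t / 2) ^ 2 := by
    have h := cosh_two_mul (t / 2)
    rw [mul_div_cancel₀ t two_ne_zero] at h
    linarith [cosh_sq_sub_sinh_sq (t / 2)]
  have hsub : 0 < sinh (t / 2 - v * t) := sinh_pos_iff.2 (by nlinarith)
  rw [sinh_sub] at hsub
  have hs : 0 < sinh (v * t) := sinh_pos_iff.2 (by positivity)
  have hc : 0 < cosh (t / 2) := cosh_pos _
  rw [hS, hC]
  nlinarith [mul_pos hc hsub, mul_pos (mul_pos hs (pow_pos hc 2)) (by linarith : 0 < 1 - 2 * v)]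

theorem strictMonoOn_tanhRatio {v : ℝ} (hv0 : 0 < v) (hv : v < 1 / 2) :
    StrictMonoOn (tanhRatio v) (Ioi 0) := by
  refine strictMonoOn_of_deriv_pos (convex_Ioi 0)
    (fun t ht => (hasDerivAt_tanhRatio v (ne_of_gt ht)).continuousAt.continuousWithinAt)
    fun t ht => ?_
  rw [interior_Ioi] at ht
  rw [(hasDerivAt_tanhRatio v (ne_of_gt ht)).deriv]
  have hsinh : sinh (2 * v * t) < 2 * v * sinh t :=
    sinh_mul_lt_mul_sinh (by positivity) (by linarith) ht
  rw [mul_assoc, sinh_two_mul] at hsinh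
  have hD : 0 < cosh (v * t) * sinh t := mul_pos (cosh_pos _) (sinh_pos_iff.2 ht)
  exact div_pos (mul_pos (by positivity) (by linarith)) (pow_pos hD 2)

theorem strictMonoOn_coshRatio {v : ℝ} (hv0 : 0 < v) (hv : v < 1 / 2) :
    StrictMonoOn (coshRatio v) (Ioi 0) := by
  refine strictMonoOn_of_deriv_pos (convex_Ioi 0)
    (fun t _ => (hasDerivAt_coshRatio v t).continuousAt.continuousWithinAt) fun t ht => ?_
  rw [interior_Ioi] at ht
  rw [(hasDerivAt_coshRatio v t).deriv]
  exact div_pos (sub_pos.2 (two_mul_sinh_mul_mul_cosh_add_one_lt hv0 hv ht))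
    (pow_pos (cosh_pos _) 3)

theorem strictMonoOn_psi {v : ℝ} (hv0 : 0 < v) (hv : v < 1 / 2) :
    StrictMonoOn (psi v) (Ioi 0) := by
  intro a ha b hb hab
  have h1 := mul_lt_mul_of_pos_left (strictMonoOn_tanhRatio hv0 hv ha hb hab) hv0
  have h2 := mul_lt_mul_of_pos_left (strictMonoOn_coshRatio hv0 hv ha hb hab) (pow_pos hv0 2)
  simp only [psi]
  linarith

theorem continuousOn_psi (v : ℝ) : ContinuousOn (psi v) (Ioi 0) := fun t ht =>
  (((continuousAt_const.mul (hasDerivAt_tanhRatio v (ne_of_gt ht)).continuousAt).add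
    (continuousAt_const.mul (hasDerivAt_coshRatio v t).continuousAt)).sub
    continuousAt_const).continuousWithinAt

theorem psi_lt_two_mul_sq_mul_cosh_add_one_sub_one {v t : ℝ} (hv0 : 0 < v) (hv : v < 1 / 2)
    (ht : 0 < t) : psi v t < 2 * v ^ 2 * (cosh t + 1) - 1 := by
  have hS := sinh_pos_iff.2 ht
  have hc := one_le_cosh (v * t)
  have hC : 0 < cosh t + 1 := by positivity
  have htanh : tanhRatio v t < v * (cosh t + 1) := by
    rw [tanhRatio, div_lt_iff₀ (by positivity)]
    have := sinh_mul_lt_mul_sinh hv0 (by linarith) ht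
    nlinarith [mul_le_mul_of_nonneg_left hc (by positivity : 0 ≤ v * sinh t * (cosh t + 1))]
  have hcosh : coshRatio v t ≤ cosh t + 1 :=
    div_le_self hC.le (one_le_pow₀ hc)
  have h1 := mul_lt_mul_of_pos_left htanh hv0
  have h2 := mul_le_mul_of_nonneg_left hcosh (sq_nonneg v)
  simp only [psi]
  linarith

theorem exists_psi_neg {v : ℝ} (hv0 : 0 < v) (hv : v < 1 / 2) : ∃ t > 0, psi v t < 0 := by
  have hcont : ContinuousAt (fun t => 2 * v ^ 2 * (cosh t + 1) - 1) 0 := by fun_prop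
  have hneg : ∀ᶠ t in 𝓝 0, 2 * v ^ 2 * (cosh t + 1) - 1 < 0 :=
    hcont.eventually_lt continuousAt_const (by simp; nlinarith)
  obtain ⟨t, hlt, ht⟩ := ((hneg.filter_mono nhdsWithin_le_nhds).and
    (self_mem_nhdsWithin (s := Ioi (0 : ℝ)))).exists
  exact ⟨t, ht, (psi_lt_two_mul_sq_mul_cosh_add_one_sub_one hv0 hv ht).trans hlt⟩

theorem exp_le_two_mul_coshRatio {v t : ℝ} (hv0 : 0 ≤ v) (ht : 0 ≤ t) :
    exp ((1 - 2 * v) * t) ≤ 2 * coshRatio v t := by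
  have hc : cosh (v * t) ≤ exp (v * t) := by
    rw [cosh_eq]
    linarith [exp_le_exp.2 (by nlinarith : -(v * t) ≤ v * t)]
  have hC : exp t ≤ 2 * (cosh t + 1) := by
    rw [cosh_eq]
    linarith [exp_pos (-t)]
  have hsq : cosh (v * t) ^ 2 ≤ exp (2 * v * t) := by
    rw [show 2 * v * t = v * t + v * t by ring, exp_add, sq]
    exact mul_le_mul hc hc (cosh_pos _).le (exp_pos _).le
  rw [coshRatio, mul_div_assoc', le_div_iff₀ (pow_pos (cosh_pos _) 2)]
  calc exp ((1 - 2 * v) * t) * cosh (v * t) ^ 2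
      ≤ exp ((1 - 2 * v) * t) * exp (2 * v * t) := by gcongr
    _ = exp t := by rw [← exp_add]; ring_nf
    _ ≤ 2 * (cosh t + 1) := hC

theorem exists_psi_pos {v : ℝ} (hv0 : 0 < v) (hv : v < 1 / 2) : ∃ t > 0, 0 < psi v t := by
  have hexp : Tendsto (fun t => v ^ 2 / 2 * exp ((1 - 2 * v) * t)) atTop atTop :=
    (tendsto_exp_atTop.comp (tendsto_id.const_mul_atTop (by linarith))).const_mul_atTop
      (by positivity)
  obtain ⟨t, hlarge, ht⟩ := ((hexp.eventually_gt_atTop 1).and (eventually_gt_atTop 0)).exists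
  have htanh : 0 < tanhRatio v t := by
    have := sinh_pos_iff.2 ht
    have := sinh_pos_iff.2 (mul_pos hv0 ht)
    unfold tanhRatio
    positivity
  have hcosh := mul_le_mul_of_nonneg_left (exp_le_two_mul_coshRatio hv0.le ht.le)
    (by positivity : 0 ≤ v ^ 2 / 2)
  refine ⟨t, ht, ?_⟩
  simp only [psi]
  nlinarith [mul_pos hv0 htanh]

theorem exists_psi_sign_change {v : ℝ} (hv0 : 0 < v) (hv : v < 1 / 2) :
    ∃ t₀ > 0, (∀ t ∈ Ioo 0 t₀, psi v t < 0) ∧ ∀ t ∈ Ioi t₀, 0 < psi v t := by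
  obtain ⟨a, ha, hψa⟩ := exists_psi_neg hv0 hv
  obtain ⟨b, hb, hψb⟩ := exists_psi_pos hv0 hv
  have hmono := strictMonoOn_psi hv0 hv
  have hab : a < b := (hmono.lt_iff_lt ha hb).1 (hψa.trans hψb)
  obtain ⟨t₀, ht₀, hzero⟩ := intermediate_value_Ioo hab.le
    ((continuousOn_psi v).mono fun t ht => lt_of_lt_of_le ha ht.1) ⟨hψa, hψb⟩
  have ht₀0 : 0 < t₀ := ha.trans ht₀.1
  refine ⟨t₀, ht₀0, fun t ht => ?_, fun t ht => ?_⟩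
  · exact hzero ▸ hmono ht.1 ht₀0 ht.2
  · exact hzero ▸ hmono ht₀0 (ht₀0.trans ht) ht

theorem continuous_hFun (v : ℝ) : Continuous (hFun v) :=
  Continuous.div (by fun_prop) (by fun_prop) fun t => by positivity

theorem hFun_lt_half {v t : ℝ} (hv0 : 0 < v) (hv : v < 1 / 2) (ht : 0 < t) :
    hFun v t < 1 / 2 := by
  have key := two_mul_sinh_mul_mul_cosh_add_one_lt hv0 hv ht
  have hS := sinh_pos_iff.2 ht
  have hC : 0 < cosh t + 1 := by positivity
  have hc := cosh_pos (v * t)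
  have hsq : sinh t ^ 2 = (cosh t - 1) * (cosh t + 1) := by nlinarith [cosh_sq' t]
  have h : 2 * v * sinh (v * t) * sinh t < (cosh t - 1) * cosh (v * t) := by
    refine lt_of_mul_lt_mul_right ?_ hC.le
    nlinarith [mul_lt_mul_of_pos_left key hS]
  rw [hFun, div_lt_iff₀ (by positivity)]
  nlinarith

theorem strictAntiOn_hFun {v a b : ℝ} (ha : 0 ≤ a) (hψ : ∀ t ∈ Ioo a b, psi v t < 0) :
    StrictAntiOn (hFun v) (Icc a b) := by
  refine strictAntiOn_of_deriv_neg (convex_Icc a b) (continuous_hFun v).continuousOn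
    fun t ht => ?_
  rw [interior_Icc] at ht
  have ht0 : 0 < t := ha.trans_lt ht.1
  rw [(hasDerivAt_hFun v ht0.ne').deriv]
  exact mul_neg_of_pos_of_neg (div_pos (sinh_pos_iff.2 ht0) (by positivity)) (hψ t ht)

theorem strictMonoOn_hFun {v a : ℝ} (ha : 0 ≤ a) (hψ : ∀ t ∈ Ioi a, 0 < psi v t) :
    StrictMonoOn (hFun v) (Ici a) := by
  refine strictMonoOn_of_deriv_pos (convex_Ici a) (continuous_hFun v).continuousOn
    fun t ht => ?_
  rw [interior_Ici] at ht
  have ht0 : 0 < t := ha.trans_lt ht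
  rw [(hasDerivAt_hFun v ht0.ne').deriv]
  exact mul_pos (div_pos (sinh_pos_iff.2 ht0) (by positivity)) (hψ t ht)

theorem stmt_12 (v : ℝ) (hv : v ∈ Ioo (0 : ℝ) (1 / 2)) :
    ∃ tstar > (0 : ℝ),
      StrictAntiOn
        (fun t => (Real.cosh (v * t) + v * Real.sinh (v * t) * Real.sinh t) /
          ((Real.cosh t + 1) * Real.cosh (v * t))) (Ioo 0 tstar) ∧
      StrictMonoOn
        (fun t => (Real.cosh (v * t) + v * Real.sinh (v * t) * Real.sinh t) /
          ((Real.cosh t + 1) * Real.cosh (v * t))) (Ioi tstar) ∧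
      ∀ t > (0 : ℝ),
        (Real.cosh (v * tstar) + v * Real.sinh (v * tstar) * Real.sinh tstar) /
          ((Real.cosh tstar + 1) * Real.cosh (v * tstar)) ≤
        (Real.cosh (v * t) + v * Real.sinh (v * t) * Real.sinh t) /
          ((Real.cosh t + 1) * Real.cosh (v * t)) ∧
        (Real.cosh (v * t) + v * Real.sinh (v * t) * Real.sinh t) /
          ((Real.cosh t + 1) * Real.cosh (v * t)) < 1 / 2 := by
  obtain ⟨hv0, hv1⟩ := hv
  obtain ⟨t₀, ht₀, hneg, hpos⟩ := exists_psi_sign_change hv0 hv1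
  have hanti := strictAntiOn_hFun le_rfl hneg
  have hmono := strictMonoOn_hFun ht₀.le hpos
  refine ⟨t₀, ht₀, hanti.mono Ioo_subset_Icc_self, hmono.mono Ioi_subset_Ici_self,
    fun t ht => ⟨?_, hFun_lt_half hv0 hv1 ht⟩⟩
  rcases le_total t t₀ with h | h
  · exact hanti.antitoneOn ⟨ht.le, h⟩ ⟨ht₀.le, le_rfl⟩ h
  · exact hmono.monotoneOn self_mem_Ici h h
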